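/- Let 1 ≤ L and N ≥ L + n, let the input sequence {u_k}_{k=0}^{N−1} be K_u-PE of order L + n for some symmetric positive definite K_u ∈ ℝ^{m(L+n)×m(L+n)}, and let Ẑ be any matrix of the same dimensions as Z̃ with ‖Ẑ − Z̃‖_2 ≤ ε (spectral norm) for some ε > 0. Then for every initial state x_0 ∈ ℝ^n, the state sequence {x_k} generated from x_0 under u satisfies [H_1(x_{[0,N−L]}); H_L(u)] [H_1(x_{[0,N−L]}); H_L(u)]^T ⪰ (1/(2(n+1))) Ẑ K_u Ẑ^T − (ε²/(n+1)) σ_max(K_u) I in the Loewner order, where σ_max denotes the maximum singular value. -/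

import Mathlib

/-!
Write `φ_t = (x_t; u_{[t,t+L-1]})`. Since `∑_r d_{n-r} A^r = 0`, the combination
`∑_r d_{n-r} φ_{k+r}` does not involve the state `x_k`: it equals `Z̃ u_{[k,k+L+n-1]}`.
Testing against a vector `v`, persistency of excitation gives
`(Z̃ᵀv)ᵀ K_u (Z̃ᵀv) ≤ ∑_k (vᵀ Z̃ u_{[k,k+L+n-1]})²`, and Cauchy–Schwarz with `‖d‖ = 1` bounds
this by `(n+1) ‖[H_1(x); H_L(u)]ᵀ v‖²`. Replacing `Z̃` by `Ẑ` costs, through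
`(a+b)ᵀK(a+b) ≤ 2aᵀKa + 2bᵀKb` and `‖(Ẑ - Z̃)ᵀv‖ ≤ ε‖v‖`, the term `2ε² σ_max(K_u) ‖v‖²`.
-/

open Matrix Finset

noncomputable def stateSeq {n m : ℕ} (A : Matrix (Fin n) (Fin n) ℝ) (B : Matrix (Fin n) (Fin m) ℝ)
    (x0 : Fin n → ℝ) (u : ℕ → Fin m → ℝ) : ℕ → Fin n → ℝ
  | 0 => x0
  | k + 1 => A.mulVec (stateSeq A B x0 u k) + B.mulVec (u k)

/-- Markov parameters `Γ̃_j` of the extended system with output `φ_k = (x_k; u_k)`: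
`Γ̃_0 = D̃ = [0; I_m]` and `Γ̃_j = C̃ A^(j-1) B = [A^(j-1) B; 0]` for `j ≥ 1`. -/
noncomputable def MarkovT {n m : ℕ} (A : Matrix (Fin n) (Fin n) ℝ) (B : Matrix (Fin n) (Fin m) ℝ) :
    ℕ → Matrix (Fin n ⊕ Fin m) (Fin m) ℝ
  | 0 => Matrix.of (Sum.elim (fun _ _ => (0 : ℝ)) (fun i l => if i = l then 1 else 0))
  | j + 1 => Matrix.of (Sum.elim (fun i l => (A ^ j * B) i l) (fun _ _ => 0))

/-- `M̃ = [M̃_n ⋯ M̃_1 M̃_0]` with `M̃_j = ∑_{q=0}^j d_{j-q} Γ̃_q`. -/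
noncomputable def Mtil {n m : ℕ} (A : Matrix (Fin n) (Fin n) ℝ) (B : Matrix (Fin n) (Fin m) ℝ)
    (d : ℕ → ℝ) : Matrix (Fin n ⊕ Fin m) (Fin (n + 1) × Fin m) ℝ :=
  Matrix.of fun i jl =>
    (∑ q ∈ Finset.range ((n - (jl.1 : ℕ)) + 1),
      d ((n - (jl.1 : ℕ)) - q) • MarkovT A B q) i jl.2

/-- The Toeplitz matrix `T ∈ ℝ^{(L-1)×(L+n-1)}` with `T_{i,j} = d_{n-(j-i)}` for
`0 ≤ j - i ≤ n` and zero otherwise. -/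
noncomputable def Tmat (d : ℕ → ℝ) (n L : ℕ) : Matrix (Fin (L - 1)) (Fin (L + n - 1)) ℝ :=
  Matrix.of fun i j =>
    if (i : ℕ) ≤ (j : ℕ) ∧ (j : ℕ) ≤ (i : ℕ) + n then d (n - ((j : ℕ) - (i : ℕ))) else 0

/-- The block matrix `Z̃ = [[M̃, 0], [0, T ⊗ I_m]]`, with `M̃` occupying the first `m(n+1)`
columns and `T ⊗ I_m` occupying the last `m(L+n-1)` columns. -/
noncomputable def Ztil {n m : ℕ} (A : Matrix (Fin n) (Fin n) ℝ) (B : Matrix (Fin n) (Fin m) ℝ)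
    (d : ℕ → ℝ) (L : ℕ) :
    Matrix ((Fin n ⊕ Fin m) ⊕ (Fin (L - 1) × Fin m)) (Fin (L + n) × Fin m) ℝ :=
  Matrix.of fun i jl =>
    match i with
    | Sum.inl i' =>
        if h : (jl.1 : ℕ) ≤ n then Mtil A B d i' (⟨(jl.1 : ℕ), by omega⟩, jl.2) else 0
    | Sum.inr il' =>
        if h : 1 ≤ (jl.1 : ℕ) then
          Tmat d n L il'.1 ⟨(jl.1 : ℕ) - 1, by have := jl.1.isLt; omega⟩ *
            (if il'.2 = jl.2 then 1 else 0)
        else 0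

/-- Reindexing of `(x_k; u_{[k,k+L-1]})`-coordinates as the coordinates of the extended-output
window `(φ_k; u_{[k+1,k+L-1]})` used in `Z̃`. -/
def embed (n m L : ℕ) : Fin n ⊕ (Fin L × Fin m) → (Fin n ⊕ Fin m) ⊕ (Fin (L - 1) × Fin m) :=
  fun i =>
    match i with
    | Sum.inl i' => Sum.inl (Sum.inl i')
    | Sum.inr il =>
        if h : (il.1 : ℕ) = 0 then Sum.inl (Sum.inr il.2)
        else Sum.inr (⟨(il.1 : ℕ) - 1, by have := il.1.isLt; omega⟩, il.2)

/-- The matrix `[H_1(x_{[0,N-L]}); H_L(u)]` whose `k`-th column is `(x_k; u_{[k,k+L-1]})`. -/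
noncomputable def Hxu {n m : ℕ} (A : Matrix (Fin n) (Fin n) ℝ) (B : Matrix (Fin n) (Fin m) ℝ)
    (x0 : Fin n → ℝ) (u : ℕ → Fin m → ℝ) (L N : ℕ) :
    Matrix (Fin n ⊕ (Fin L × Fin m)) (Fin (N - L + 1)) ℝ :=
  Matrix.of fun i k =>
    Sum.elim (fun i' : Fin n => stateSeq A B x0 u (k : ℕ) i')
      (fun il : Fin L × Fin m => u ((k : ℕ) + (il.1 : ℕ)) il.2) i

/-- The set of (real) eigenvalues of a square matrix. -/
def eigSet {k : Type} [Fintype k] (A : Matrix k k ℝ) : Set ℝ :=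
  {t : ℝ | ∃ v : k → ℝ, v ≠ 0 ∧ A.mulVec v = t • v}

/-- Maximum (real) eigenvalue `λ_max` of a square matrix. -/
noncomputable def lamMax {k : Type} [Fintype k] (A : Matrix k k ℝ) : ℝ :=
  sSup (eigSet A)

/-- Maximum singular value `σ_max(A) = √(λ_max(Aᵀ A))`. -/
noncomputable def sigmaMax {k l : Type} [Fintype k] [Fintype l] (A : Matrix k l ℝ) : ℝ :=
  Real.sqrt (lamMax (Aᴴ * A))

/-- Euclidean norm of a finitely supported vector. -/
noncomputable def enorm' {k : Type} [Fintype k] (v : k → ℝ) : ℝ :=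
  Real.sqrt (∑ i, v i ^ 2)

section LinearAlgebra

variable {ι κ : Type} [Fintype ι] [Fintype κ]

theorem enorm'_sq (v : ι → ℝ) : enorm' v ^ 2 = v ⬝ᵥ v := by
  rw [enorm', Real.sq_sqrt (Finset.sum_nonneg fun i _ => sq_nonneg _)]
  simp only [dotProduct, sq]

theorem enorm'_nonneg (v : ι → ℝ) : 0 ≤ enorm' v := Real.sqrt_nonneg _

theorem dotProduct_le_enorm'_mul_enorm' (v w : ι → ℝ) : v ⬝ᵥ w ≤ enorm' v * enorm' w := by
  simpa [enorm', dotProduct] using Real.sum_mul_le_sqrt_mul_sqrt univ v w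

theorem enorm'_comp_le {f : ι → κ} (hf : Function.Injective f) (v : κ → ℝ) :
    enorm' (v ∘ f) ≤ enorm' v := by
  refine Real.sqrt_le_sqrt ((Finset.sum_map univ ⟨f, hf⟩ fun j => v j ^ 2).symm.trans_le ?_)
  exact Finset.sum_le_sum_of_subset_of_nonneg (Finset.subset_univ _) fun j _ _ => sq_nonneg _

theorem enorm'_vecMul_le {E : Matrix ι κ ℝ} {ε : ℝ} (hε : 0 ≤ ε)
    (h : ∀ v, enorm' (E *ᵥ v) ≤ ε * enorm' v) (x : ι → ℝ) :
    enorm' (x ᵥ* E) ≤ ε * enorm' x := by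
  set w := x ᵥ* E
  have hw : enorm' w ^ 2 ≤ enorm' x * (ε * enorm' w) := by
    calc enorm' w ^ 2 = x ⬝ᵥ (E *ᵥ w) := by rw [enorm'_sq, dotProduct_mulVec]
      _ ≤ enorm' x * enorm' (E *ᵥ w) := dotProduct_le_enorm'_mul_enorm' _ _
      _ ≤ enorm' x * (ε * enorm' w) := by gcongr; exacts [enorm'_nonneg x, h w]
  rcases (enorm'_nonneg w).eq_or_lt with h0 | h0
  · exact h0 ▸ mul_nonneg hε (enorm'_nonneg x)
  · nlinarith

theorem eigSet_eq_spectrum [DecidableEq ι] (M : Matrix ι ι ℝ) : eigSet M = spectrum ℝ M := by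
  ext t
  rw [← Matrix.spectrum_toLin', ← Module.End.hasEigenvalue_iff_mem_spectrum,
    Module.End.hasEigenvalue_iff, Submodule.ne_bot_iff]
  simp [eigSet, and_comm]

open scoped MatrixOrder in
theorem Matrix.IsHermitian.dotProduct_mulVec_le_lamMax_mul [DecidableEq ι] {H : Matrix ι ι ℝ}
    (hH : H.IsHermitian) (v : ι → ℝ) : v ⬝ᵥ (H *ᵥ v) ≤ lamMax H * (v ⬝ᵥ v) := by
  have hle : H ≤ algebraMap ℝ _ (lamMax H) := by
    refine le_algebraMap_of_spectrum_le (fun t ht => ?_) hH.isSelfAdjoint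
    rw [lamMax, eigSet_eq_spectrum]
    exact le_csSup H.finite_spectrum.bddAbove ht
  have := (Matrix.le_iff.mp hle).dotProduct_mulVec_nonneg v
  simp only [Algebra.algebraMap_eq_smul_one, sub_mulVec, smul_mulVec, one_mulVec,
    dotProduct_sub, dotProduct_smul, smul_eq_mul, star_trivial] at this
  linarith

theorem dotProduct_mulVec_le_sigmaMax_mul [DecidableEq ι] (K : Matrix ι ι ℝ) (v : ι → ℝ) :
    v ⬝ᵥ (K *ᵥ v) ≤ sigmaMax K * (v ⬝ᵥ v) := by
  have hK : enorm' (K *ᵥ v) ≤ sigmaMax K * enorm' v := by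
    have hsq : enorm' (K *ᵥ v) ^ 2 ≤ lamMax (Kᴴ * K) * enorm' v ^ 2 := by
      rw [enorm'_sq, enorm'_sq]
      calc (K *ᵥ v) ⬝ᵥ (K *ᵥ v) = v ⬝ᵥ ((Kᴴ * K) *ᵥ v) := by
            rw [← mulVec_mulVec, dotProduct_mulVec v, conjTranspose_eq_transpose_of_trivial,
              vecMul_transpose]
        _ ≤ _ := (isHermitian_conjTranspose_mul_self K).dotProduct_mulVec_le_lamMax_mul v
    calc enorm' (K *ᵥ v) = √(enorm' (K *ᵥ v) ^ 2) := (Real.sqrt_sq (enorm'_nonneg _)).symm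
      _ ≤ √(lamMax (Kᴴ * K) * enorm' v ^ 2) := Real.sqrt_le_sqrt hsq
      _ = sigmaMax K * enorm' v := by
        rw [Real.sqrt_mul' _ (sq_nonneg _), Real.sqrt_sq (enorm'_nonneg _), sigmaMax]
  calc v ⬝ᵥ (K *ᵥ v) ≤ enorm' v * enorm' (K *ᵥ v) := dotProduct_le_enorm'_mul_enorm' _ _
    _ ≤ enorm' v * (sigmaMax K * enorm' v) := by gcongr; exact enorm'_nonneg v
    _ = sigmaMax K * (v ⬝ᵥ v) := by rw [← enorm'_sq]; ring

theorem Matrix.PosSemidef.dotProduct_mulVec_add_le {K : Matrix κ κ ℝ} (hK : K.PosSemidef)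
    (a b : κ → ℝ) :
    (a + b) ⬝ᵥ (K *ᵥ (a + b)) ≤ 2 * (a ⬝ᵥ (K *ᵥ a)) + 2 * (b ⬝ᵥ (K *ᵥ b)) := by
  have hdiff := hK.dotProduct_mulVec_nonneg (a - b)
  have hsymm : a ⬝ᵥ (K *ᵥ b) = b ⬝ᵥ (K *ᵥ a) := by
    rw [dotProduct_mulVec, ← mulVec_transpose, ← conjTranspose_eq_transpose_of_trivial, hK.1.eq,
      dotProduct_comm]
  simp only [star_trivial, mulVec_add, mulVec_sub, dotProduct_add, dotProduct_sub, add_dotProduct,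
    sub_dotProduct] at hdiff ⊢
  linarith

theorem dotProduct_mul_mul_conjTranspose_mulVec (M : Matrix ι κ ℝ) (K : Matrix κ κ ℝ)
    (x : ι → ℝ) : x ⬝ᵥ ((M * K * Mᴴ) *ᵥ x) = (x ᵥ* M) ⬝ᵥ (K *ᵥ (x ᵥ* M)) := by
  rw [← mulVec_mulVec, ← mulVec_mulVec, dotProduct_mulVec, conjTranspose_eq_transpose_of_trivial,
    mulVec_transpose]

theorem posSemidef_mul_conjTranspose_sub_of_le {τ : Type} [Fintype τ] [DecidableEq ι]
    [DecidableEq τ] {P : Matrix ι τ ℝ} {Z : Matrix ι κ ℝ} {K : Matrix κ κ ℝ} (hK : K.IsHermitian) {a b : ℝ}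
    (h : ∀ x, a * ((x ᵥ* Z) ⬝ᵥ (K *ᵥ (x ᵥ* Z))) ≤ (x ᵥ* P) ⬝ᵥ (x ᵥ* P) + b * (x ⬝ᵥ x)) :
    (P * Pᴴ - (a • (Z * K * Zᴴ) - b • 1)).PosSemidef := by
  refine posSemidef_iff_dotProduct_mulVec.mpr ⟨?_, fun x => ?_⟩
  · exact (isHermitian_mul_conjTranspose_self P).sub
      (((isHermitian_mul_mul_conjTranspose Z hK).smul (.all _)).sub (isHermitian_one.smul (.all _)))
  have hP := dotProduct_mul_mul_conjTranspose_mulVec P 1 x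
  rw [Matrix.mul_one, one_mulVec] at hP
  rw [star_trivial, sub_mulVec, sub_mulVec, dotProduct_sub, dotProduct_sub, smul_mulVec,
    smul_mulVec, one_mulVec, dotProduct_smul, dotProduct_smul, smul_eq_mul, smul_eq_mul, hP,
    dotProduct_mul_mul_conjTranspose_mulVec]
  linarith [h x]

theorem dotProduct_mulVec_le_sum_sq_of_posSemidef_sub {α : Type} {s : Finset α} {U : α → κ → ℝ}
    {K : Matrix κ κ ℝ} (h : ((∑ k ∈ s, vecMulVec (U k) (U k)) - K).PosSemidef) (w : κ → ℝ) :
    w ⬝ᵥ (K *ᵥ w) ≤ ∑ k ∈ s, (U k ⬝ᵥ w) ^ 2 := by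
  have hk : ∀ k, w ⬝ᵥ (vecMulVec (U k) (U k) *ᵥ w) = (U k ⬝ᵥ w) ^ 2 := fun k => by
    rw [vecMulVec_mulVec, op_smul_eq_smul, dotProduct_smul, smul_eq_mul, dotProduct_comm w, sq]
  have := h.dotProduct_mulVec_nonneg w
  rw [star_trivial, sub_mulVec, dotProduct_sub, sum_mulVec, dotProduct_sum] at this
  simp only [hk] at this
  linarith

theorem vecMul_dotProduct_mulVec_le_of_perturbation [DecidableEq κ] {K : Matrix κ κ ℝ}
    (hK : K.PosSemidef) {Zhat Z : Matrix ι κ ℝ} {ε : ℝ} (hε : 0 ≤ ε)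
    (h : ∀ v, enorm' ((Zhat - Z) *ᵥ v) ≤ ε * enorm' v) (x : ι → ℝ) :
    (x ᵥ* Zhat) ⬝ᵥ (K *ᵥ (x ᵥ* Zhat)) ≤
      2 * ((x ᵥ* Z) ⬝ᵥ (K *ᵥ (x ᵥ* Z))) + 2 * (ε ^ 2 * sigmaMax K * (x ⬝ᵥ x)) := by
  set e := x ᵥ* (Zhat - Z)
  have he : e ⬝ᵥ e ≤ ε ^ 2 * (x ⬝ᵥ x) := by
    rw [← enorm'_sq, ← enorm'_sq, ← mul_pow]
    exact pow_le_pow_left₀ (enorm'_nonneg e) (enorm'_vecMul_le hε h x) 2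
  have hσ : 0 ≤ sigmaMax K := Real.sqrt_nonneg _
  calc (x ᵥ* Zhat) ⬝ᵥ (K *ᵥ (x ᵥ* Zhat)) = (x ᵥ* Z + e) ⬝ᵥ (K *ᵥ (x ᵥ* Z + e)) := by
        rw [← vecMul_add, add_sub_cancel]
    _ ≤ 2 * ((x ᵥ* Z) ⬝ᵥ (K *ᵥ (x ᵥ* Z))) + 2 * (e ⬝ᵥ (K *ᵥ e)) := hK.dotProduct_mulVec_add_le _ _
    _ ≤ 2 * ((x ᵥ* Z) ⬝ᵥ (K *ᵥ (x ᵥ* Z))) + 2 * (sigmaMax K * (e ⬝ᵥ e)) := by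
        gcongr; exact dotProduct_mulVec_le_sigmaMax_mul K e
    _ ≤ 2 * ((x ᵥ* Z) ⬝ᵥ (K *ᵥ (x ᵥ* Z))) + 2 * (ε ^ 2 * sigmaMax K * (x ⬝ᵥ x)) := by
        have := mul_le_mul_of_nonneg_left he hσ
        linarith

end LinearAlgebra

theorem sum_sq_sum_mul_shift_le (c y : ℕ → ℝ) (K n : ℕ) :
    ∑ k ∈ range K, (∑ r ∈ range (n + 1), c r * y (k + r)) ^ 2 ≤
      (n + 1) * (∑ r ∈ range (n + 1), c r ^ 2) * ∑ t ∈ range (K + n), y t ^ 2 := by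
  have hshift : ∀ r ∈ range (n + 1),
      ∑ k ∈ range K, y (k + r) ^ 2 ≤ ∑ t ∈ range (K + n), y t ^ 2 := by
    intro r hr
    rw [mem_range] at hr
    calc ∑ k ∈ range K, y (k + r) ^ 2 = ∑ t ∈ Ico r (r + K), y t ^ 2 := by
          rw [sum_Ico_eq_sum_range, Nat.add_sub_cancel_left]
          simp only [add_comm]
      _ ≤ _ := by
          refine sum_le_sum_of_subset_of_nonneg (fun t ht => ?_) fun t _ _ => sq_nonneg _
          rw [mem_Ico] at ht; rw [mem_range]; omega
  calc ∑ k ∈ range K, (∑ r ∈ range (n + 1), c r * y (k + r)) ^ 2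
      ≤ ∑ k ∈ range K, (∑ r ∈ range (n + 1), c r ^ 2) * ∑ r ∈ range (n + 1), y (k + r) ^ 2 :=
        sum_le_sum fun k _ => sum_mul_sq_le_sq_mul_sq _ _ _
    _ = (∑ r ∈ range (n + 1), c r ^ 2) * ∑ r ∈ range (n + 1), ∑ k ∈ range K, y (k + r) ^ 2 := by
        rw [← mul_sum, sum_comm]
    _ ≤ (∑ r ∈ range (n + 1), c r ^ 2) * ∑ r ∈ range (n + 1), ∑ t ∈ range (K + n), y t ^ 2 := by
        gcongr with r hr
        exact hshift r hr
    _ = _ := by rw [sum_const, card_range, nsmul_eq_mul]; push_cast; ring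

theorem Fin.sum_ite_window {β : Type*} [AddCommMonoid β] {M : ℕ} (a n : ℕ) (h : a + n < M)
    (g : ℕ → β) :
    ∑ j : Fin M, (if a ≤ (j : ℕ) ∧ (j : ℕ) ≤ a + n then g j else 0) =
      ∑ r ∈ range (n + 1), g (a + r) := by
  rw [Fin.sum_univ_eq_sum_range (fun j => if a ≤ j ∧ j ≤ a + n then g j else 0), ← sum_filter,
    show (range M).filter (fun j => a ≤ j ∧ j ≤ a + n) = Ico a (a + n + 1) by
      ext j; simp only [mem_filter, mem_range, mem_Ico]; omega,
    sum_Ico_eq_sum_range, show a + n + 1 - a = n + 1 by omega]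

section System

variable {n m : ℕ} (A : Matrix (Fin n) (Fin n) ℝ) (B : Matrix (Fin n) (Fin m) ℝ) (d : ℕ → ℝ)

theorem Mtil_inl_apply (i : Fin n) (p : Fin (n + 1)) (l : Fin m) :
    Mtil A B d (Sum.inl i) (p, l) = ∑ q ∈ range (n - p), d (n - p - (q + 1)) * (A ^ q * B) i l := by
  simp [Mtil, Matrix.sum_apply, sum_range_succ', MarkovT]

theorem Mtil_inr_apply (l0 : Fin m) (p : Fin (n + 1)) (l : Fin m) :
    Mtil A B d (Sum.inr l0) (p, l) = if l0 = l then d (n - p) else 0 := by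
  simp [Mtil, Matrix.sum_apply, sum_range_succ', MarkovT]

theorem Ztil_embed_inl_apply (L : ℕ) (i : Fin n) (j : Fin (L + n)) (l : Fin m) :
    Ztil A B d L (embed n m L (Sum.inl i)) (j, l) =
      if (j : ℕ) ≤ n then ∑ q ∈ range (n - j), d (n - j - (q + 1)) * (A ^ q * B) i l else 0 := by
  simp [Ztil, embed, Mtil_inl_apply]

theorem Ztil_embed_inr_apply (L : ℕ) (t : Fin L) (l0 : Fin m) (j : Fin (L + n)) (l : Fin m) :
    Ztil A B d L (embed n m L (Sum.inr (t, l0))) (j, l) =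
      if l0 = l then (if (t : ℕ) ≤ j ∧ (j : ℕ) ≤ t + n then d (n - (j - t)) else 0) else 0 := by
  by_cases ht : (t : ℕ) = 0 <;>
    simp only [Ztil, Tmat, embed, ht, of_apply, ↓reduceDIte, dite_eq_ite, Mtil_inr_apply, mul_ite,
      mul_one, mul_zero, zero_le, zero_add, true_and, tsub_zero] <;>
    split_ifs <;> first | rfl | omega | (congr 1; omega)

theorem stateSeq_add (x0 : Fin n → ℝ) (u : ℕ → Fin m → ℝ) (k r : ℕ) :
    stateSeq A B x0 u (k + r) =
      A ^ r *ᵥ stateSeq A B x0 u k + ∑ s ∈ range r, (A ^ (r - 1 - s) * B) *ᵥ u (k + s) := by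
  induction r generalizing k with
  | zero => simp
  | succ r ih =>
    rw [← add_assoc, add_right_comm, ih, sum_range_succ']
    simp only [stateSeq, mulVec_add, mulVec_mulVec, ← pow_succ, Nat.sub_sub, add_comm 1,
      Nat.add_sub_cancel, Nat.sub_zero, add_right_comm k, add_zero, ← add_assoc]
    abel

theorem sum_smul_stateSeq (hCayley : ∑ j ∈ range (n + 1), d j • A ^ (n - j) = 0)
    (x0 : Fin n → ℝ) (u : ℕ → Fin m → ℝ) (k : ℕ) :
    ∑ r ∈ range (n + 1), d (n - r) • stateSeq A B x0 u (k + r) =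
      ∑ p ∈ range (n + 1), ∑ q ∈ range (n - p),
        d (n - p - (q + 1)) • ((A ^ q * B) *ᵥ u (k + p)) := by
  have hfree : ∑ r ∈ range (n + 1), d (n - r) • A ^ r = 0 := by
    rw [← sum_range_reflect, ← hCayley]
    refine sum_congr rfl fun r hr => ?_
    rw [mem_range] at hr
    rw [show n + 1 - 1 - r = n - r by omega, Nat.sub_sub_self (by omega)]
  set f : ℕ → ℕ → Fin n → ℝ := fun p q => d (n - p - (q + 1)) • ((A ^ q * B) *ᵥ u (k + p))
  calc ∑ r ∈ range (n + 1), d (n - r) • stateSeq A B x0 u (k + r)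
      = (∑ r ∈ range (n + 1), d (n - r) • A ^ r) *ᵥ stateSeq A B x0 u k +
          ∑ r ∈ range (n + 1), ∑ s ∈ range r, d (n - r) • ((A ^ (r - 1 - s) * B) *ᵥ u (k + s)) := by
        simp only [stateSeq_add, smul_add, sum_add_distrib, smul_sum, sum_mulVec, smul_mulVec]
    _ = ∑ i ∈ range n, ∑ s ∈ range (i + 1), f s (i - s) := by
        rw [hfree, zero_mulVec, zero_add, sum_range_succ', sum_range_zero, add_zero]
        refine sum_congr rfl fun i _ => sum_congr rfl fun s hs => ?_
        rw [mem_range] at hs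
        simp only [f]
        rw [show n - s - (i - s + 1) = n - (i + 1) by omega, show i + 1 - 1 - s = i - s by omega]
    _ = ∑ p ∈ range n, ∑ q ∈ range (n - p), f p q := sum_range_diag_flip n f
    _ = _ := by rw [sum_range_succ _ n, Nat.sub_self, sum_range_zero, add_zero]

/-- The stacked inputs `u_{[k,k+p-1]}`. -/
def inputWindow (u : ℕ → Fin m → ℝ) (k p : ℕ) : Fin p × Fin m → ℝ :=
  fun il => u (k + il.1) il.2

/-- `(x_t; u_{[t,t+L-1]})`, the `t`-th column of `Hxu`. -/
noncomputable def extState (x0 : Fin n → ℝ) (u : ℕ → Fin m → ℝ) (L t : ℕ) :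
    Fin n ⊕ (Fin L × Fin m) → ℝ :=
  Sum.elim (stateSeq A B x0 u t) (inputWindow u t L)

theorem Ztil_mulVec_inputWindow (hCayley : ∑ j ∈ range (n + 1), d j • A ^ (n - j) = 0)
    {L : ℕ} (hL : 1 ≤ L) (x0 : Fin n → ℝ) (u : ℕ → Fin m → ℝ) (k : ℕ) :
    (Ztil A B d L).submatrix (embed n m L) id *ᵥ inputWindow u k (L + n) =
      ∑ r ∈ range (n + 1), d (n - r) • extState A B x0 u L (k + r) := by
  funext i
  rw [mulVec, dotProduct, Fintype.sum_prod_type, Finset.sum_apply]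
  rcases i with i | ⟨t, l0⟩
  · have hstate := congrFun (sum_smul_stateSeq A B d hCayley x0 u k) i
    simp only [Finset.sum_apply, Pi.smul_apply, smul_eq_mul] at hstate
    have hwin := Fin.sum_ite_window 0 n (by omega : 0 + n < L + n)
      fun p => ∑ q ∈ range (n - p), d (n - p - (q + 1)) * ((A ^ q * B) *ᵥ u (k + p)) i
    simp only [zero_le, true_and, zero_add] at hwin
    simp only [submatrix_apply, id, Ztil_embed_inl_apply, ite_mul, zero_mul, sum_ite_irrel,
      sum_const_zero, extState, Pi.smul_apply, Sum.elim_inl, smul_eq_mul, hstate, ← hwin]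
    refine sum_congr rfl fun j _ => if_congr Iff.rfl ?_ rfl
    simp only [inputWindow, mulVec, dotProduct, sum_mul, mul_sum]
    rw [sum_comm]
    exact sum_congr rfl fun q _ => sum_congr rfl fun l _ => by ring
  · simp only [submatrix_apply, id, Ztil_embed_inr_apply, ite_mul, zero_mul, extState,
      Pi.smul_apply, Sum.elim_inr, inputWindow, sum_ite_eq, mem_univ, if_true, smul_eq_mul]
    rw [Fin.sum_ite_window (M := L + n) t n (by have := t.isLt; omega)
      fun j => d (n - (j - t)) * u (k + j) l0]
    refine sum_congr rfl fun r _ => ?_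
    rw [Nat.add_sub_cancel_left, add_left_comm, add_comm (t : ℕ)]

theorem embed_injective (n m L : ℕ) : Function.Injective (embed n m L) := by
  rintro (i | ⟨t, l⟩) (i' | ⟨t', l'⟩) h <;>
    simp only [embed] at h <;> (try split_ifs at h) <;> simp_all [Fin.ext_iff]
  omega

theorem vecMul_Ztil_dotProduct_mulVec_le (hCayley : ∑ j ∈ range (n + 1), d j • A ^ (n - j) = 0)
    (hdnorm : ∑ j ∈ range (n + 1), d j ^ 2 = 1) {L N : ℕ} (hL : 1 ≤ L) (hN : L + n ≤ N)
    (u : ℕ → Fin m → ℝ) {Ku : Matrix (Fin (L + n) × Fin m) (Fin (L + n) × Fin m) ℝ}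
    (hPE : ((∑ k ∈ range (N - (L + n) + 1),
        vecMulVec (inputWindow u k (L + n)) (inputWindow u k (L + n))) - Ku).PosSemidef)
    (x0 : Fin n → ℝ) (x : Fin n ⊕ (Fin L × Fin m) → ℝ) :
    (x ᵥ* (Ztil A B d L).submatrix (embed n m L) id) ⬝ᵥ
        (Ku *ᵥ (x ᵥ* (Ztil A B d L).submatrix (embed n m L) id)) ≤
      (n + 1) * ((x ᵥ* Hxu A B x0 u L N) ⬝ᵥ (x ᵥ* Hxu A B x0 u L N)) := by
  set Z := (Ztil A B d L).submatrix (embed n m L) id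
  set y : ℕ → ℝ := fun t => x ⬝ᵥ extState A B x0 u L t
  have hwindow : ∀ k, inputWindow u k (L + n) ⬝ᵥ (x ᵥ* Z) =
      ∑ r ∈ range (n + 1), d (n - r) * y (k + r) := fun k => by
    rw [dotProduct_comm, ← dotProduct_mulVec, Ztil_mulVec_inputWindow A B d hCayley hL x0 u k,
      dotProduct_sum]
    simp only [dotProduct_smul, smul_eq_mul, y]
  have hd : ∑ r ∈ range (n + 1), d (n - r) ^ 2 = 1 := by
    rw [← hdnorm, ← sum_range_reflect (fun j => d j ^ 2)]
    simp only [Nat.add_sub_cancel]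
  calc (x ᵥ* Z) ⬝ᵥ (Ku *ᵥ (x ᵥ* Z))
      ≤ ∑ k ∈ range (N - (L + n) + 1), (inputWindow u k (L + n) ⬝ᵥ (x ᵥ* Z)) ^ 2 :=
        dotProduct_mulVec_le_sum_sq_of_posSemidef_sub hPE _
    _ ≤ (n + 1) * (∑ r ∈ range (n + 1), d (n - r) ^ 2) *
          ∑ t ∈ range (N - (L + n) + 1 + n), y t ^ 2 := by
        simp only [hwindow]
        exact sum_sq_sum_mul_shift_le (fun r => d (n - r)) y _ n
    _ = (n + 1) * ((x ᵥ* Hxu A B x0 u L N) ⬝ᵥ (x ᵥ* Hxu A B x0 u L N)) := by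
        rw [hd, mul_one, show N - (L + n) + 1 + n = N - L + 1 by omega, dotProduct,
          ← Fin.sum_univ_eq_sum_range (fun t => y t ^ 2)]
        simp only [sq]
        rfl

end System

theorem stmt_18_general {n m : ℕ}
    (A : Matrix (Fin n) (Fin n) ℝ) (B : Matrix (Fin n) (Fin m) ℝ)
    (d : ℕ → ℝ)
    (hdnorm : ∑ j ∈ Finset.range (n + 1), d j ^ 2 = 1)
    (hCayley : ∑ j ∈ Finset.range (n + 1), d j • A ^ (n - j) = 0)
    (L N : ℕ) (hL : 1 ≤ L) (hN : L + n ≤ N)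
    (u : ℕ → Fin m → ℝ)
    (Ku : Matrix (Fin (L + n) × Fin m) (Fin (L + n) × Fin m) ℝ) (hKu : Ku.PosDef)
    (hPE : ((∑ k ∈ Finset.range (N - (L + n) + 1),
        vecMulVec (fun il : Fin (L + n) × Fin m => u (k + (il.1 : ℕ)) il.2)
          (fun il : Fin (L + n) × Fin m => u (k + (il.1 : ℕ)) il.2)) - Ku).PosSemidef)
    (ε : ℝ) (hε : 0 < ε)
    (Zhat : Matrix ((Fin n ⊕ Fin m) ⊕ (Fin (L - 1) × Fin m)) (Fin (L + n) × Fin m) ℝ)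
    (hZhat : ∀ v : Fin (L + n) × Fin m → ℝ,
        enorm' ((Zhat - Ztil A B d L).mulVec v) ≤ ε * enorm' v) :
    ∀ x0 : Fin n → ℝ,
      (Hxu A B x0 u L N * (Hxu A B x0 u L N)ᴴ -
          (((1 : ℝ) / (2 * (n + 1))) •
              ((Zhat * Ku * Zhatᴴ).submatrix (embed n m L) (embed n m L)) -
            (ε ^ 2 / (n + 1) * sigmaMax Ku) •
              (1 : Matrix (Fin n ⊕ (Fin L × Fin m)) (Fin n ⊕ (Fin L × Fin m)) ℝ))).PosSemidef := by
  intro x0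
  have hperturb : ∀ v, enorm' ((Zhat.submatrix (embed n m L) id -
      (Ztil A B d L).submatrix (embed n m L) id) *ᵥ v) ≤ ε * enorm' v :=
    fun v => (enorm'_comp_le (embed_injective n m L) _).trans (hZhat v)
  refine posSemidef_mul_conjTranspose_sub_of_le (Z := Zhat.submatrix (embed n m L) id) hKu.1
    fun x => ?_
  have hZ := vecMul_dotProduct_mulVec_le_of_perturbation hKu.posSemidef hε.le hperturb x
  have hPE' := vecMul_Ztil_dotProduct_mulVec_le A B d hCayley hdnorm hL hN u hPE x0 x
  rw [div_mul_eq_mul_div, one_mul, div_le_iff₀ (by positivity)]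
  have hscale : ε ^ 2 / (n + 1) * sigmaMax Ku * (x ⬝ᵥ x) * (2 * (n + 1)) =
      2 * (ε ^ 2 * sigmaMax Ku * (x ⬝ᵥ x)) := by
    field_simp
  rw [add_mul, hscale]
  linarith

/-- robustness of the PE bound: if `u` is `K_u`-PE of order `L+n` and
`‖Ẑ - Z̃‖₂ ≤ ε` (spectral norm, expressed via the Euclidean operator bound), then
`[H_1(x); H_L(u)] [H_1(x); H_L(u)]ᵀ ⪰ (1/(2(n+1))) Ẑ K_u Ẑᵀ - (ε²/(n+1)) σ_max(K_u) I`. -/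
theorem stmt_18 {n m : ℕ} (hn : 0 < n) (hm : 0 < m)
    (A : Matrix (Fin n) (Fin n) ℝ) (B : Matrix (Fin n) (Fin m) ℝ)
    (d : ℕ → ℝ) (hd0 : d 0 ≠ 0)
    (hdnorm : ∑ j ∈ Finset.range (n + 1), d j ^ 2 = 1)
    (hCayley : ∑ j ∈ Finset.range (n + 1), d j • A ^ (n - j) = 0)
    (L N : ℕ) (hL : 1 ≤ L) (hN : L + n ≤ N)
    (u : ℕ → Fin m → ℝ)
    (Ku : Matrix (Fin (L + n) × Fin m) (Fin (L + n) × Fin m) ℝ) (hKu : Ku.PosDef)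
    (hPE : ((∑ k ∈ Finset.range (N - (L + n) + 1),
        vecMulVec (fun il : Fin (L + n) × Fin m => u (k + (il.1 : ℕ)) il.2)
          (fun il : Fin (L + n) × Fin m => u (k + (il.1 : ℕ)) il.2)) - Ku).PosSemidef)
    (ε : ℝ) (hε : 0 < ε)
    (Zhat : Matrix ((Fin n ⊕ Fin m) ⊕ (Fin (L - 1) × Fin m)) (Fin (L + n) × Fin m) ℝ)
    (hZhat : ∀ v : Fin (L + n) × Fin m → ℝ,
        enorm' ((Zhat - Ztil A B d L).mulVec v) ≤ ε * enorm' v) :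
    ∀ x0 : Fin n → ℝ,
      (Hxu A B x0 u L N * (Hxu A B x0 u L N)ᴴ -
          (((1 : ℝ) / (2 * (n + 1))) •
              ((Zhat * Ku * Zhatᴴ).submatrix (embed n m L) (embed n m L)) -
            (ε ^ 2 / (n + 1) * sigmaMax Ku) •
              (1 : Matrix (Fin n ⊕ (Fin L × Fin m)) (Fin n ⊕ (Fin L × Fin m)) ℝ))).PosSemidef :=
  stmt_18_general A B d hdnorm hCayley L N hL hN u Ku hKu hPE ε hε Zhat hZhat
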